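/- Let U : 𝒫₂(ℝ^d) → ℝ be continuously L-differentiable (L-C¹) and let φ : ℝ^d → ℝ^d be of class C¹ with bounded derivative. Define V(m) := U(φ♯m) for m ∈ 𝒫₂(ℝ^d). Then V is L-C¹ and D_m V(m,y) = (Dφ(y))ᵀ · D_m U(φ♯m, φ(y)) for all (m,y) ∈ 𝒫₂(ℝ^d)×ℝ^d. -/

import Mathlib

/-!
The flat derivative of `V` is `(m, y) ↦ δU/δm(φ♯m, φ y)`. Pushforward commutes with mixtures,
`φ♯((1-s)m + s m') = (1-s) φ♯m + s φ♯m'`, and `∫ f d(φ♯m) = ∫ f ∘ φ dm`, so the defining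
identity and the normalization of `δU/δm` transfer to `V`. A bounded derivative makes `φ`
`K`-Lipschitz, and pushing couplings forward by `φ × φ` makes `m ↦ φ♯m` `K`-Lipschitz for `d₂`;
this transfers every continuity requirement. The formula for `D_m V` is the chain rule.
-/

open MeasureTheory Set

noncomputable section

/-- Euclidean space `ℝ^d`. -/
abbrev Ed (d : ℕ) : Type := EuclideanSpace ℝ (Fin d)

/-- `m ∈ 𝒫₂(ℝ^d)`: Borel probability measure with finite second moment. -/
def IsP2 {d : ℕ} (μ : Measure (Ed d)) : Prop :=
  IsProbabilityMeasure μ ∧ Integrable (fun x => ‖x‖ ^ 2) μ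

/-- `π` is a coupling of `μ` and `ν`. -/
def IsCoupling {d : ℕ} (π : Measure (Ed d × Ed d)) (μ ν : Measure (Ed d)) : Prop :=
  π.map Prod.fst = μ ∧ π.map Prod.snd = ν

/-- The Wasserstein distance `d₂`. -/
noncomputable def W2 {d : ℕ} (μ ν : Measure (Ed d)) : ℝ :=
  sInf { r : ℝ | ∃ π : Measure (Ed d × Ed d), IsProbabilityMeasure π ∧ IsCoupling π μ ν ∧
    r = (∫ p, ‖p.1 - p.2‖ ^ 2 ∂π) ^ (1 / 2 : ℝ) }

/-- The convex combination `(1-s) μ + s ν` of measures. -/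
noncomputable def mixM {d : ℕ} (s : ℝ) (μ ν : Measure (Ed d)) : Measure (Ed d) :=
  ENNReal.ofReal (1 - s) • μ + ENNReal.ofReal s • ν

/-- `U : 𝒫₂(ℝ^d) → ℝ` is continuously `L`-differentiable (`L-C¹`) with flat derivative `F`:
`U` is continuous, `F` is a continuous bounded flat derivative of `U` (normalized so that
`∫ F(m,y) m(dy) = 0`), `y ↦ F(m,y)` is everywhere differentiable, and
`D_m U = D_y F` is continuous and bounded on `𝒫₂ × ℝ^d`. -/
def IsLC1 {d : ℕ} (U : Measure (Ed d) → ℝ) (F : Measure (Ed d) → Ed d → ℝ) : Prop :=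
  -- `U` continuous w.r.t. `d₂`
  (∀ m, IsP2 m → ∀ ε > (0 : ℝ), ∃ δ > (0 : ℝ), ∀ m', IsP2 m' →
    W2 m m' < δ → |U m' - U m| < ε) ∧
  -- fundamental identity for the flat derivative
  (∀ m m', IsP2 m → IsP2 m' →
    U m' - U m =
      ∫ s in (0 : ℝ)..1,
        ((∫ y, F (mixM s m m') y ∂m') - ∫ y, F (mixM s m m') y ∂m)) ∧
  -- normalization
  (∀ m, IsP2 m → (∫ y, F m y ∂m) = 0) ∧
  -- `F` bounded and continuous
  (∃ B, ∀ m y, IsP2 m → |F m y| ≤ B) ∧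
  (∀ m y, IsP2 m → ∀ ε > (0 : ℝ), ∃ δ > (0 : ℝ), ∀ m' y', IsP2 m' →
    W2 m m' < δ → ‖y' - y‖ < δ → |F m' y' - F m y| < ε) ∧
  -- `y ↦ F(m,y)` everywhere differentiable with `D_m U := D_y F` bounded and continuous
  (∀ m, IsP2 m → Differentiable ℝ (F m)) ∧
  (∃ B, ∀ m y, IsP2 m → ‖fderiv ℝ (F m) y‖ ≤ B) ∧
  (∀ m y, IsP2 m → ∀ ε > (0 : ℝ), ∃ δ > (0 : ℝ), ∀ m' y', IsP2 m' →
    W2 m m' < δ → ‖y' - y‖ < δ → ‖fderiv ℝ (F m') y' - fderiv ℝ (F m) y‖ < ε)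

open scoped NNReal

theorem lt_of_le_mul_of_lt_div_add_one {K a b δ : ℝ} (hK : 0 ≤ K) (hδ : 0 < δ)
    (hab : a ≤ K * b) (hb : b < δ / (K + 1)) : a < δ :=
  calc a ≤ K * b := hab
    _ ≤ K * (δ / (K + 1)) := mul_le_mul_of_nonneg_left hb.le hK
    _ < δ := by
      rw [← mul_div_assoc, div_lt_iff₀ (by positivity)]
      linarith

theorem ContinuousLinearMap.norm_comp_sub_comp_le {E G H : Type*} [NormedAddCommGroup E]
    [NormedAddCommGroup G] [NormedAddCommGroup H] [NormedSpace ℝ E] [NormedSpace ℝ G]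
    [NormedSpace ℝ H] (A A' : G →L[ℝ] H) (P P' : E →L[ℝ] G) :
    ‖A'.comp P' - A.comp P‖ ≤ ‖A' - A‖ * ‖P'‖ + ‖A‖ * ‖P' - P‖ :=
  calc ‖A'.comp P' - A.comp P‖ = ‖(A' - A).comp P' + A.comp (P' - P)‖ := by
        rw [ContinuousLinearMap.sub_comp, ContinuousLinearMap.comp_sub, sub_add_sub_cancel]
    _ ≤ ‖A' - A‖ * ‖P'‖ + ‖A‖ * ‖P' - P‖ :=
        (norm_add_le _ _).trans (add_le_add (opNorm_comp_le _ _) (opNorm_comp_le _ _))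

section Wasserstein

variable {d : ℕ}

theorem IsP2.map {φ : Ed d → Ed d} {K : ℝ≥0} (hφ : LipschitzWith K φ) {m : Measure (Ed d)}
    (hm : IsP2 m) : IsP2 (m.map φ) := by
  have := hm.1
  have hφm := hφ.continuous.measurable
  refine ⟨Measure.isProbabilityMeasure_map hφm.aemeasurable, ?_⟩
  rw [integrable_map_measure (g := fun x : Ed d => ‖x‖ ^ 2)
    (continuous_norm.pow 2).aestronglyMeasurable hφm.aemeasurable]
  refine ((integrable_const (2 * ‖φ 0‖ ^ 2)).add (hm.2.const_mul (2 * K ^ 2))).mono'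
    ((continuous_norm.comp hφ.continuous).pow 2).aestronglyMeasurable
    (.of_forall fun x => ?_)
  have hφx : ‖φ x‖ ≤ ‖φ 0‖ + K * ‖x‖ := by
    have hlip : ‖φ x - φ 0‖ ≤ K * ‖x‖ := by simpa using hφ.norm_sub_le x 0
    linarith [norm_sub_norm_le (φ x) (φ 0)]
  simp only [Function.comp_apply, norm_pow, norm_norm, Pi.add_apply]
  nlinarith [(pow_le_pow_left₀ (norm_nonneg _) hφx 2).trans add_sq_le]

theorem IsP2.mixM {μ ν : Measure (Ed d)} (hμ : IsP2 μ) (hν : IsP2 ν) {s : ℝ}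
    (hs : s ∈ Icc (0 : ℝ) 1) : IsP2 (mixM s μ ν) := by
  have := hμ.1
  have := hν.1
  refine ⟨⟨?_⟩, (hμ.2.smul_measure ENNReal.ofReal_ne_top).add_measure
    (hν.2.smul_measure ENNReal.ofReal_ne_top)⟩
  simp only [_root_.mixM, Measure.coe_add, Pi.add_apply, Measure.smul_apply, smul_eq_mul,
    measure_univ, mul_one]
  rw [← ENNReal.ofReal_add (by linarith [hs.2]) hs.1]
  simp

theorem map_mixM {φ : Ed d → Ed d} (hφ : Measurable φ) (s : ℝ) (μ ν : Measure (Ed d)) :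
    (mixM s μ ν).map φ = mixM s (μ.map φ) (ν.map φ) := by
  simp [mixM, Measure.map_add _ _ hφ, Measure.map_smul]

theorem IsCoupling.map_prodMap {φ : Ed d → Ed d} (hφ : Measurable φ)
    {π : Measure (Ed d × Ed d)} {μ ν : Measure (Ed d)} (hπ : IsCoupling π μ ν) :
    IsCoupling (π.map (Prod.map φ φ)) (μ.map φ) (ν.map φ) := by
  constructor
  · rw [Measure.map_map measurable_fst (hφ.prodMap hφ), ← hπ.1,
      Measure.map_map hφ measurable_fst, Prod.map_fst']
  · rw [Measure.map_map measurable_snd (hφ.prodMap hφ), ← hπ.2,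
      Measure.map_map hφ measurable_snd, Prod.map_snd']

theorem IsCoupling.integrable_cost {π : Measure (Ed d × Ed d)} {μ ν : Measure (Ed d)}
    (hπ : IsCoupling π μ ν) (hμ : IsP2 μ) (hν : IsP2 ν) :
    Integrable (fun p : Ed d × Ed d => ‖p.1 - p.2‖ ^ 2) π := by
  have h₁ : Integrable (fun p : Ed d × Ed d => ‖p.1‖ ^ 2) π :=
    (integrable_map_measure (continuous_norm.pow 2).aestronglyMeasurable
      measurable_fst.aemeasurable).mp (hπ.1 ▸ hμ.2)
  have h₂ : Integrable (fun p : Ed d × Ed d => ‖p.2‖ ^ 2) π :=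
    (integrable_map_measure (continuous_norm.pow 2).aestronglyMeasurable
      measurable_snd.aemeasurable).mp (hπ.2 ▸ hν.2)
  refine ((h₁.const_mul 2).add (h₂.const_mul 2)).mono'
    ((continuous_fst.sub continuous_snd).norm.pow 2).aestronglyMeasurable
    (.of_forall fun p => ?_)
  simp only [norm_pow, norm_norm, Pi.add_apply]
  linarith [(pow_le_pow_left₀ (norm_nonneg _) (norm_sub_le p.1 p.2) 2).trans add_sq_le]

theorem W2_le_of_isCoupling {π : Measure (Ed d × Ed d)} [IsProbabilityMeasure π]
    {μ ν : Measure (Ed d)} (hπ : IsCoupling π μ ν) :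
    W2 μ ν ≤ (∫ p, ‖p.1 - p.2‖ ^ 2 ∂π) ^ (1 / 2 : ℝ) := by
  refine csInf_le ⟨0, ?_⟩ ⟨π, inferInstance, hπ, rfl⟩
  rintro r ⟨π', -, -, rfl⟩
  exact Real.rpow_nonneg (integral_nonneg fun p => by positivity) _

theorem W2_map_le {φ : Ed d → Ed d} {K : ℝ≥0} (hφ : LipschitzWith K φ)
    {μ ν : Measure (Ed d)} (hμ : IsP2 μ) (hν : IsP2 ν) :
    W2 (μ.map φ) (ν.map φ) ≤ K * W2 μ ν := by
  have := hμ.1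
  have := hν.1
  have hφm := hφ.continuous.measurable
  set S := { r : ℝ | ∃ π : Measure (Ed d × Ed d), IsProbabilityMeasure π ∧ IsCoupling π μ ν ∧
    r = (∫ p, ‖p.1 - p.2‖ ^ 2 ∂π) ^ (1 / 2 : ℝ) }
  refine le_trans ?_ (Real.sInf_smul_of_nonneg K.coe_nonneg S).le
  refine le_csInf ⟨_, smul_mem_smul_set ⟨μ.prod ν, inferInstance, ⟨by simp, by simp⟩, rfl⟩⟩ ?_
  rintro _ ⟨_, ⟨π, hπP, hπ, rfl⟩, rfl⟩
  have hπφ := hπ.map_prodMap hφm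
  have := Measure.isProbabilityMeasure_map (μ := π) (hφm.prodMap hφm).aemeasurable
  refine (W2_le_of_isCoupling hπφ).trans ?_
  rw [integral_map (f := fun p : Ed d × Ed d => ‖p.1 - p.2‖ ^ 2) (hφm.prodMap hφm).aemeasurable
    ((continuous_fst.sub continuous_snd).norm.pow 2).aestronglyMeasurable]
  have hcost := hπ.integrable_cost hμ hν
  have hle : ∫ p, ‖φ p.1 - φ p.2‖ ^ 2 ∂π ≤ K ^ 2 * ∫ p, ‖p.1 - p.2‖ ^ 2 ∂π := by
    rw [← integral_const_mul]
    refine integral_mono_of_nonneg (.of_forall fun p => by positivity)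
      (hcost.const_mul _) (.of_forall fun p => ?_)
    simpa [mul_pow] using pow_le_pow_left₀ (norm_nonneg _) (hφ.norm_sub_le p.1 p.2) 2
  show _ ≤ (K : ℝ) * _
  rw [← Real.sqrt_eq_rpow, ← Real.sqrt_eq_rpow]
  calc Real.sqrt (∫ p, ‖φ p.1 - φ p.2‖ ^ 2 ∂π)
      ≤ Real.sqrt (K ^ 2 * ∫ p, ‖p.1 - p.2‖ ^ 2 ∂π) := Real.sqrt_le_sqrt hle
    _ = K * Real.sqrt (∫ p, ‖p.1 - p.2‖ ^ 2 ∂π) := by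
      rw [Real.sqrt_mul (sq_nonneg _), Real.sqrt_sq K.coe_nonneg]

end Wasserstein

section CompMap

variable {d : ℕ} {U : Measure (Ed d) → ℝ} {F : Measure (Ed d) → Ed d → ℝ} {φ : Ed d → Ed d}
  {K : ℝ≥0}

theorem W2_map_lt (hφ : LipschitzWith K φ) {m m' : Measure (Ed d)} (hm : IsP2 m)
    (hm' : IsP2 m') {δ : ℝ} (hδ : 0 < δ) (h : W2 m m' < δ / (K + 1)) :
    W2 (m.map φ) (m'.map φ) < δ :=
  lt_of_le_mul_of_lt_div_add_one K.coe_nonneg hδ (W2_map_le hφ hm hm') h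

theorem LipschitzWith.norm_sub_lt (hφ : LipschitzWith K φ) {y y' : Ed d} {δ : ℝ} (hδ : 0 < δ)
    (h : ‖y' - y‖ < δ / (K + 1)) : ‖φ y' - φ y‖ < δ :=
  lt_of_le_mul_of_lt_div_add_one K.coe_nonneg hδ (hφ.norm_sub_le y' y) h

theorem IsLC1.fderiv_comp_map (hU : IsLC1 U F) (hφ : LipschitzWith K φ)
    (hφd : Differentiable ℝ φ) {m : Measure (Ed d)} (hm : IsP2 m) (y : Ed d) :
    fderiv ℝ (fun y => F (m.map φ) (φ y)) y =
      (fderiv ℝ (F (m.map φ)) (φ y)).comp (fderiv ℝ φ y) :=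
  fderiv_comp y (hU.2.2.2.2.2.1 _ (hm.map hφ) _) (hφd y)

theorem IsLC1.sub_eq_integral_comp_map (hU : IsLC1 U F) (hφ : LipschitzWith K φ)
    {m m' : Measure (Ed d)} (hm : IsP2 m) (hm' : IsP2 m') :
    U (m'.map φ) - U (m.map φ) = ∫ s in (0 : ℝ)..1,
      ((∫ y, F ((mixM s m m').map φ) (φ y) ∂m') - ∫ y, F ((mixM s m m').map φ) (φ y) ∂m) := by
  rw [hU.2.1 _ _ (hm.map hφ) (hm'.map hφ)]
  refine intervalIntegral.integral_congr fun s hs => ?_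
  rw [uIcc_of_le zero_le_one] at hs
  have hφm := hφ.continuous.measurable
  have hFs : Continuous (F (mixM s (m.map φ) (m'.map φ))) :=
    (hU.2.2.2.2.2.1 _ ((hm.map hφ).mixM (hm'.map hφ) hs)).continuous
  rw [map_mixM hφm, integral_map hφm.aemeasurable hFs.aestronglyMeasurable,
    integral_map hφm.aemeasurable hFs.aestronglyMeasurable]

theorem IsLC1.fderiv_comp_map_sub_lt (hU : IsLC1 U F) (hφ : ContDiff ℝ 1 φ)
    (hφK : ∀ y, ‖fderiv ℝ φ y‖₊ ≤ K) {m : Measure (Ed d)} {y : Ed d} (hm : IsP2 m)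
    {ε : ℝ} (hε : 0 < ε) : ∃ δ > (0 : ℝ), ∀ m' y', IsP2 m' → W2 m m' < δ → ‖y' - y‖ < δ →
      ‖fderiv ℝ (fun y => F (m'.map φ) (φ y)) y' - fderiv ℝ (fun y => F (m.map φ) (φ y)) y‖
        < ε := by
  have hφd := hφ.differentiable one_ne_zero
  have hlip := lipschitzWith_of_nnnorm_fderiv_le hφd hφK
  obtain ⟨BD, hBD⟩ := hU.2.2.2.2.2.2.1
  set A := fderiv ℝ (F (m.map φ)) (φ y)
  have hA : ‖A‖ ≤ BD := hBD _ _ (hm.map hlip)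
  have hBD0 : 0 ≤ BD := (norm_nonneg _).trans hA
  obtain ⟨δ₁, hδ₁, hA'⟩ := hU.2.2.2.2.2.2.2 _ (φ y) (hm.map hlip) (ε / 2 / (K + 1))
    (by positivity)
  obtain ⟨δ₂, hδ₂, hP'⟩ := Metric.continuous_iff.mp (hφ.continuous_fderiv one_ne_zero) y
    (ε / 2 / (BD + 1)) (by positivity)
  refine ⟨min (δ₁ / (K + 1)) δ₂, by positivity, fun m' y' hm' hW hy => ?_⟩
  rw [hU.fderiv_comp_map hlip hφd hm, hU.fderiv_comp_map hlip hφd hm']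
  refine (ContinuousLinearMap.norm_comp_sub_comp_le _ _ _ _).trans_lt ?_
  have hAA : ‖fderiv ℝ (F (m'.map φ)) (φ y') - A‖ < ε / 2 / (K + 1) :=
    hA' _ _ (hm'.map hlip) (W2_map_lt hlip hm hm' hδ₁ (hW.trans_le (min_le_left _ _)))
      (hlip.norm_sub_lt hδ₁ (hy.trans_le (min_le_left _ _)))
  have hPP : ‖fderiv ℝ φ y' - fderiv ℝ φ y‖ < ε / 2 / (BD + 1) := by
    simpa only [dist_eq_norm] using
      hP' y' (by simpa only [dist_eq_norm] using hy.trans_le (min_le_right _ _))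
  have h₁ : ‖fderiv ℝ (F (m'.map φ)) (φ y') - A‖ * ‖fderiv ℝ φ y'‖ < ε / 2 :=
    lt_of_le_mul_of_lt_div_add_one K.coe_nonneg (half_pos hε)
      (by rw [mul_comm]; exact mul_le_mul_of_nonneg_right (hφK y') (norm_nonneg _)) hAA
  have h₂ := lt_of_le_mul_of_lt_div_add_one hBD0 (half_pos hε)
    (mul_le_mul_of_nonneg_right hA (norm_nonneg _)) hPP
  linarith

theorem IsLC1.comp_map (hU : IsLC1 U F) (hφ : ContDiff ℝ 1 φ)
    (hφK : ∀ y, ‖fderiv ℝ φ y‖₊ ≤ K) :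
    IsLC1 (fun m => U (m.map φ)) (fun m y => F (m.map φ) (φ y)) := by
  obtain ⟨hUc, -, hUn, ⟨BF, hBF⟩, hFc, hFd, ⟨BD, hBD⟩, -⟩ := id hU
  have hφd := hφ.differentiable one_ne_zero
  have hlip := lipschitzWith_of_nnnorm_fderiv_le hφd hφK
  refine ⟨fun m hm ε hε => ?_, fun m m' hm hm' => hU.sub_eq_integral_comp_map hlip hm hm',
    fun m hm => ?_, ⟨BF, fun m y hm => hBF _ _ (hm.map hlip)⟩, fun m y hm ε hε => ?_,
    fun m hm => (hFd _ (hm.map hlip)).comp hφd, ⟨BD * K, fun m y hm => ?_⟩,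
    fun m y hm ε hε => hU.fderiv_comp_map_sub_lt hφ hφK hm hε⟩
  · obtain ⟨δ, hδ, hU'⟩ := hUc _ (hm.map hlip) ε hε
    exact ⟨δ / (K + 1), by positivity,
      fun m' hm' hW => hU' _ (hm'.map hlip) (W2_map_lt hlip hm hm' hδ hW)⟩
  · rw [← integral_map hlip.continuous.measurable.aemeasurable
      (hFd _ (hm.map hlip)).continuous.aestronglyMeasurable]
    exact hUn _ (hm.map hlip)
  · obtain ⟨δ, hδ, hF'⟩ := hFc _ (φ y) (hm.map hlip) ε hε
    exact ⟨δ / (K + 1), by positivity, fun m' y' hm' hW hy =>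
      hF' _ _ (hm'.map hlip) (W2_map_lt hlip hm hm' hδ hW) (hlip.norm_sub_lt hδ hy)⟩
  · have hA := hBD _ (φ y) (hm.map hlip)
    rw [hU.fderiv_comp_map hlip hφd hm]
    exact (ContinuousLinearMap.opNorm_comp_le _ _).trans
      (mul_le_mul hA (hφK y) (norm_nonneg _) ((norm_nonneg _).trans hA))

end CompMap

theorem stmt_13_general (d : ℕ)
    (U : Measure (Ed d) → ℝ) (F : Measure (Ed d) → Ed d → ℝ) (φ : Ed d → Ed d)
    (hφ : ContDiff ℝ 1 φ) (hφb : ∃ B, ∀ y, ‖fderiv ℝ φ y‖ ≤ B)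
    (hU : IsLC1 U F) :
    ∃ G : Measure (Ed d) → Ed d → ℝ,
      IsLC1 (fun m => U (Measure.map φ m)) G ∧
      ∀ m y, IsP2 m →
        fderiv ℝ (G m) y =
          (fderiv ℝ (F (Measure.map φ m)) (φ y)).comp (fderiv ℝ φ y) := by
  obtain ⟨B, hB⟩ := hφb
  have hφK : ∀ y, ‖fderiv ℝ φ y‖₊ ≤ B.toNNReal := fun y =>
    (hB y).trans (Real.le_coe_toNNReal B)
  have hlip := lipschitzWith_of_nnnorm_fderiv_le (hφ.differentiable one_ne_zero) hφK
  exact ⟨_, hU.comp_map hφ hφK,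
    fun m y hm => hU.fderiv_comp_map hlip (hφ.differentiable one_ne_zero) hm y⟩

/-- if `U` is `L-C¹` and `φ ∈ C¹` with bounded derivative, then
`V(m) := U(φ♯m)` is `L-C¹` with `D_m V(m,y) = (Dφ(y))ᵀ D_m U(φ♯m, φ(y))`
(stated as the equality of derivatives `D(δV/δm)(m,·)(y) = D(δU/δm)(φ♯m,·)(φ(y)) ∘ Dφ(y)`). -/
theorem stmt_13 (d : ℕ) (hd : 1 ≤ d)
    (U : Measure (Ed d) → ℝ) (F : Measure (Ed d) → Ed d → ℝ) (φ : Ed d → Ed d)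
    (hφ : ContDiff ℝ 1 φ) (hφb : ∃ B, ∀ y, ‖fderiv ℝ φ y‖ ≤ B)
    (hU : IsLC1 U F) :
    ∃ G : Measure (Ed d) → Ed d → ℝ,
      IsLC1 (fun m => U (Measure.map φ m)) G ∧
      ∀ m y, IsP2 m →
        fderiv ℝ (G m) y =
          (fderiv ℝ (F (Measure.map φ m)) (φ y)).comp (fderiv ℝ φ y) :=
  stmt_13_general d U F φ hφ hφb hU
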